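/- Let (a_k)_{k≥0} be a sequence of complex numbers with limsup_{k→∞} |a_k|^{1/k} = ∞. Set A_n = max_{1≤k≤n} |a_k|^{1/k} and p_n(z) = ∑_{k=0}^n a_k A_n^{−k} z^k. Then for every δ > 0 and every γ ∈ (0,1), liminf_{n→∞} max_{|z| = 1+δ} |p_n(z)|^{1/n} / |z| ≥ (1+δ)^{−γ} · L(γ), where L(γ) = liminf_{n→∞} ( max_{(1-γ)n ≤ k ≤ n} |a_k|^{1/k} ) / A_n. Consequently, liminf_{n→∞} max_{|z| = 1+δ} |p_n(z)|^{1/n} / |z| ≥ G, where G = lim_{γ→0+} L(γ) is the gauge of (a_k). -/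

import Mathlib

open Filter Polynomial Metric Set

/-!
Let `k ∈ [(1 - γ) n, n]` be an index at which `A_n(γ)` is attained and put `q = A_n(γ) / A_n ≤ 1`.
The `k`-th coefficient of `p_n` has modulus `q ^ k`, so Cauchy's estimate on `|z| = 1 + δ` gives
`(q (1 + δ)) ^ k ≤ max |p_n|`. Taking `n`-th roots, and using `q ≤ q ^ (k / n)` and
`k / n ≥ 1 - γ`, yields `(1 + δ) ^ (-γ) q ≤ max |p_n| ^ (1 / n) / (1 + δ)` for every `n`; then pass
to the `liminf` in `n`, and let `γ → 0` for the gauge.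
-/

namespace Polynomial

theorem iteratedDeriv_eval {𝕜 : Type*} [NontriviallyNormedField 𝕜] (p : 𝕜[X]) (k : ℕ) :
    iteratedDeriv k (fun x => p.eval x) = fun x => (derivative^[k] p).eval x := by
  induction k with
  | zero => simp
  | succ k ih =>
    ext x
    rw [iteratedDeriv_succ, ih, Polynomial.deriv, Function.iterate_succ_apply']

theorem iteratedDeriv_eval_zero {𝕜 : Type*} [NontriviallyNormedField 𝕜] (p : 𝕜[X]) (k : ℕ) :
    iteratedDeriv k (fun x => p.eval x) 0 = k.factorial * p.coeff k := by
  simp only [iteratedDeriv_eval, ← coeff_zero_eq_eval_zero, coeff_iterate_derivative, zero_add,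
    Nat.descFactorial_self, nsmul_eq_mul]

theorem norm_coeff_mul_pow_le {p : ℂ[X]} {R M : ℝ} (hR : 0 < R)
    (hM : ∀ z ∈ sphere (0 : ℂ) R, ‖p.eval z‖ ≤ M) (k : ℕ) : ‖p.coeff k‖ * R ^ k ≤ M := by
  have := Complex.norm_iteratedDeriv_le_of_forall_mem_sphere_norm_le k hR
    p.differentiable.diffContOnCl hM
  rwa [iteratedDeriv_eval_zero, norm_mul, Complex.norm_natCast, mul_div_assoc,
    mul_le_mul_iff_right₀ (by positivity), le_div_iff₀ (by positivity)] at this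

end Polynomial

noncomputable def sphereRootMax (f : ℂ → ℂ) (n : ℕ) (R : ℝ) : ℝ :=
  sSup ((fun z : ℂ => ‖f z‖ ^ ((n : ℝ)⁻¹) / ‖z‖) '' sphere (0 : ℂ) R)

theorem sphereRootMax_nonneg (f : ℂ → ℂ) (n : ℕ) (R : ℝ) : 0 ≤ sphereRootMax f n R :=
  Real.sSup_nonneg <| by
    rintro _ ⟨z, -, rfl⟩
    positivity

theorem norm_le_sphereRootMax_mul_pow {f : ℂ → ℂ} {n : ℕ} {R : ℝ} {z : ℂ} (hf : Continuous f)
    (hR : 0 < R) (hn : n ≠ 0) (hz : z ∈ sphere (0 : ℂ) R) :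
    ‖f z‖ ≤ (sphereRootMax f n R * R) ^ n := by
  have hnorm : ∀ w ∈ sphere (0 : ℂ) R, ‖w‖ = R := fun w hw => mem_sphere_zero_iff_norm.1 hw
  have hcont : ContinuousOn (fun w : ℂ => ‖f w‖ ^ ((n : ℝ)⁻¹) / ‖w‖) (sphere 0 R) :=
    ((hf.norm.rpow_const fun _ => Or.inr (by positivity)).continuousOn).div
      continuous_norm.continuousOn fun w hw => by rw [hnorm w hw]; exact hR.ne'
  have hle : ‖f z‖ ^ ((n : ℝ)⁻¹) / ‖z‖ ≤ sphereRootMax f n R :=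
    le_csSup ((isCompact_sphere 0 R).bddAbove_image hcont) ⟨z, hz, rfl⟩
  rw [hnorm z hz, div_le_iff₀ hR] at hle
  calc ‖f z‖ = (‖f z‖ ^ ((n : ℝ)⁻¹)) ^ n := (Real.rpow_inv_natCast_pow (norm_nonneg _) hn).symm
    _ ≤ (sphereRootMax f n R * R) ^ n := pow_le_pow_left₀ (by positivity) hle n

theorem Polynomial.norm_coeff_mul_pow_le_sphereRootMax (p : ℂ[X]) {n : ℕ} {R : ℝ} (hR : 0 < R)
    (hn : n ≠ 0) (k : ℕ) :
    ‖p.coeff k‖ * R ^ k ≤ (sphereRootMax (fun z => p.eval z) n R * R) ^ n :=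
  p.norm_coeff_mul_pow_le hR (fun _ hz => norm_le_sphereRootMax_mul_pow p.continuous hR hn hz) k

theorem rpow_neg_mul_le_of_pow_le {q R S γ : ℝ} {k n : ℕ} (hq0 : 0 ≤ q) (hq1 : q ≤ 1) (hR : 1 ≤ R)
    (hS : 0 ≤ S) (hn : n ≠ 0) (hkn : k ≤ n) (hγk : (1 - γ) * n ≤ k)
    (h : (q * R) ^ k ≤ (S * R) ^ n) : R ^ (-γ) * q ≤ S := by
  have hn' : (0 : ℝ) < n := by positivity
  set t : ℝ := k / n
  have ht1 : t ≤ 1 := (div_le_one hn').2 (by exact_mod_cast hkn)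
  have hγt : 1 - γ ≤ t := (le_div_iff₀ hn').2 hγk
  have hroot : (q * R) ^ t ≤ S * R := by
    have := Real.rpow_le_rpow (by positivity) h (inv_nonneg.2 hn'.le)
    rwa [Real.pow_rpow_inv_natCast (by positivity) hn, ← Real.rpow_natCast,
      ← Real.rpow_mul (by positivity), ← div_eq_mul_inv] at this
  have hR0 : 0 < R := by linarith
  refine le_of_mul_le_mul_right ?_ hR0
  calc R ^ (-γ) * q * R = q * R ^ (1 - γ) := by
        rw [sub_eq_neg_add, Real.rpow_add hR0, Real.rpow_one]; ring
    _ ≤ q ^ t * R ^ t := mul_le_mul (Real.self_le_rpow_of_le_one hq0 hq1 ht1)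
        (Real.rpow_le_rpow_of_exponent_le hR hγt) (by positivity) (by positivity)
    _ = (q * R) ^ t := (Real.mul_rpow hq0 hR0.le).symm
    _ ≤ S * R := hroot

noncomputable def normalizedSection (a : ℕ → ℂ) (c : ℝ) (n : ℕ) : ℂ[X] :=
  ∑ k ∈ Finset.range (n + 1), C (a k * (c : ℂ)⁻¹ ^ k) * X ^ k

theorem normalizedSection_coeff (a : ℕ → ℂ) (c : ℝ) {k n : ℕ} (hk : k ≤ n) :
    (normalizedSection a c n).coeff k = a k * (c : ℂ)⁻¹ ^ k := by
  simp only [normalizedSection, finsetSum_coeff, coeff_C_mul_X_pow, Finset.sum_ite_eq,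
    Finset.mem_range, Nat.lt_succ_of_le hk, if_true]

theorem rpow_neg_mul_div_le_sphereRootMax {a : ℕ → ℂ} {n : ℕ} {An Bn γ δ : ℝ} (hn : 1 ≤ n)
    (hγ : γ < 1) (hδ : 0 < δ)
    (hA : IsGreatest {x : ℝ | ∃ k : ℕ, 1 ≤ k ∧ k ≤ n ∧ x = ‖a k‖ ^ ((k : ℝ)⁻¹)} An)
    (hB : IsGreatest {x : ℝ | ∃ k : ℕ, (1 - γ) * (n : ℝ) ≤ (k : ℝ) ∧ k ≤ n ∧
      x = ‖a k‖ ^ ((k : ℝ)⁻¹)} Bn) :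
    (1 + δ) ^ (-γ) * (Bn / An) ≤
      sphereRootMax (fun z => (normalizedSection a An n).eval z) n (1 + δ) := by
  obtain ⟨⟨k, hγk, hkn, rfl⟩, -⟩ := hB
  have hk : k ≠ 0 := by
    rintro rfl
    rw [Nat.cast_zero] at hγk
    linarith [mul_pos (sub_pos.2 hγ) (Nat.cast_pos.2 hn : (0 : ℝ) < n)]
  have hα : 0 ≤ ‖a k‖ ^ ((k : ℝ)⁻¹) := by positivity
  have hαA : ‖a k‖ ^ ((k : ℝ)⁻¹) ≤ An := hA.2 ⟨k, Nat.one_le_iff_ne_zero.2 hk, hkn, rfl⟩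
  have hA0 : 0 ≤ An := hα.trans hαA
  have hcoeff : ‖(normalizedSection a An n).coeff k‖ = (‖a k‖ ^ ((k : ℝ)⁻¹) / An) ^ k := by
    rw [normalizedSection_coeff _ _ hkn, norm_mul, norm_pow, norm_inv, Complex.norm_real,
      Real.norm_of_nonneg hA0, div_pow, Real.rpow_inv_natCast_pow (norm_nonneg _) hk,
      div_eq_mul_inv, inv_pow]
  refine rpow_neg_mul_le_of_pow_le (div_nonneg hα hA0) (div_le_one_of_le₀ hαA hA0) (by linarith)
    (sphereRootMax_nonneg _ _ _) (by omega) hkn hγk ?_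
  rw [mul_pow, ← hcoeff]
  exact (normalizedSection a An n).norm_coeff_mul_pow_le_sphereRootMax (by linarith) (by omega) k

theorem coe_mul_le_liminf_of_eventually_le {α : Type*} {f : Filter α} [f.NeBot] {u v : α → ℝ}
    {c ℓ : ℝ} (hc : 0 ≤ c) (hℓ : (ℓ : EReal) = liminf (fun x => (u x : EReal)) f)
    (h : ∀ᶠ x in f, c * u x ≤ v x) :
    ((c * ℓ : ℝ) : EReal) ≤ liminf (fun x => (v x : EReal)) f := by
  rw [EReal.coe_mul, hℓ,
    ← EReal.liminf_const_mul_of_nonneg_of_ne_top (EReal.coe_nonneg.2 hc) (EReal.coe_ne_top c)]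
  exact liminf_le_liminf (h.mono fun x hx => by exact_mod_cast hx)

theorem coe_le_of_forall_rpow_neg_mul_le {R G : ℝ} {L : ℝ → ℝ} {x : EReal} (hR : 0 < R)
    (hG : Tendsto L (nhdsWithin 0 (Ioi 0)) (nhds G))
    (h : ∀ γ ∈ Ioo (0 : ℝ) 1, ((R ^ (-γ) * L γ : ℝ) : EReal) ≤ x) : (G : EReal) ≤ x := by
  have hpow : Tendsto (fun γ : ℝ => R ^ (-γ)) (nhdsWithin 0 (Ioi 0)) (nhds 1) := by
    have : Continuous fun γ : ℝ => R ^ (-γ) :=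
      (Real.continuous_const_rpow hR.ne').comp continuous_neg
    simpa using (this.tendsto 0).mono_left nhdsWithin_le_nhds
  have hlim := (continuous_coe_real_ereal.tendsto G).comp (by simpa using hpow.mul hG)
  exact le_of_tendsto hlim (eventually_of_mem (Ioo_mem_nhdsGT zero_lt_one) h)

theorem stmt_15_general (a : ℕ → ℂ) (A : ℕ → ℝ) (B : ℝ → ℕ → ℝ) (L : ℝ → ℝ) (G : ℝ)
    (P : ℕ → Polynomial ℂ)
    (hA : ∀ n : ℕ, 1 ≤ n → IsGreatest
      {x : ℝ | ∃ k : ℕ, 1 ≤ k ∧ k ≤ n ∧ x = ‖a k‖ ^ ((k : ℝ)⁻¹)} (A n))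
    (hB : ∀ γ ∈ Set.Ioo (0 : ℝ) 1, ∀ n : ℕ, 1 ≤ n → IsGreatest
      {x : ℝ | ∃ k : ℕ, (1 - γ) * (n : ℝ) ≤ (k : ℝ) ∧ k ≤ n ∧
        x = ‖a k‖ ^ ((k : ℝ)⁻¹)} (B γ n))
    (hL : ∀ γ ∈ Set.Ioo (0 : ℝ) 1,
      ((L γ : ℝ) : EReal) = Filter.liminf (fun n : ℕ => ((B γ n / A n : ℝ) : EReal))
        Filter.atTop)
    (hG : Filter.Tendsto L (nhdsWithin 0 (Set.Ioi (0 : ℝ))) (nhds G))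
    (hP : ∀ n : ℕ, P n = ∑ k ∈ Finset.range (n + 1),
      Polynomial.C (a k * ((A n : ℂ))⁻¹ ^ k) * Polynomial.X ^ k) :
    (∀ δ : ℝ, 0 < δ → ∀ γ ∈ Set.Ioo (0 : ℝ) 1,
      (((1 + δ) ^ (-γ) * L γ : ℝ) : EReal) ≤
        Filter.liminf (fun n : ℕ =>
          ((sSup ((fun z : ℂ =>
              ‖(P n).eval z‖ ^ ((n : ℝ)⁻¹) / ‖z‖) ''
            Metric.sphere (0 : ℂ) (1 + δ)) : ℝ) : EReal)) Filter.atTop) ∧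
    (∀ δ : ℝ, 0 < δ →
      ((G : ℝ) : EReal) ≤
        Filter.liminf (fun n : ℕ =>
          ((sSup ((fun z : ℂ =>
              ‖(P n).eval z‖ ^ ((n : ℝ)⁻¹) / ‖z‖) ''
            Metric.sphere (0 : ℂ) (1 + δ)) : ℝ) : EReal)) Filter.atTop) := by
  have hbound : ∀ δ : ℝ, 0 < δ → ∀ γ ∈ Ioo (0 : ℝ) 1,
      (((1 + δ) ^ (-γ) * L γ : ℝ) : EReal) ≤
        liminf (fun n : ℕ => (sphereRootMax (fun z => (P n).eval z) n (1 + δ) : EReal)) atTop := by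
    intro δ hδ γ hγ
    refine coe_mul_le_liminf_of_eventually_le (by positivity) (hL γ hγ) ?_
    filter_upwards [eventually_ge_atTop 1] with n hn
    rw [hP n]
    exact rpow_neg_mul_div_le_sphereRootMax hn hγ.2 hδ (hA n hn) (hB γ hγ n hn)
  exact ⟨hbound, fun δ hδ => coe_le_of_forall_rpow_neg_mul_le (by linarith) hG (hbound δ hδ)⟩

/-- the key lower bound in the proof of Theorem 3.4. Let `∑ a_k z^k`
have null radius of convergence, `A_n = max_{1 ≤ k ≤ n} |a_k|^{1/k}`, and let
`p_n(z) = ∑_{k=0}^n a_k A_n^{-k} z^k` be the normalized sections. Then for all `δ > 0`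
and `γ ∈ (0,1)`, `liminf_n max_{|z|=1+δ} |p_n(z)|^{1/n}/|z| ≥ (1+δ)^{-γ} L(γ)`, where
`L(γ) = liminf_n (max_{(1-γ)n ≤ k ≤ n} |a_k|^{1/k})/A_n`; consequently this liminf is at
least the gauge `G = lim_{γ→0⁺} L(γ)`. -/
theorem stmt_15 (a : ℕ → ℂ) (A : ℕ → ℝ) (B : ℝ → ℕ → ℝ) (L : ℝ → ℝ) (G : ℝ)
    (P : ℕ → Polynomial ℂ)
    (hrad : Filter.limsup
      (fun k : ℕ => ((‖a k‖ ^ ((k : ℝ)⁻¹) : ℝ) : EReal)) Filter.atTop = ⊤)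
    (hA : ∀ n : ℕ, 1 ≤ n → IsGreatest
      {x : ℝ | ∃ k : ℕ, 1 ≤ k ∧ k ≤ n ∧ x = ‖a k‖ ^ ((k : ℝ)⁻¹)} (A n))
    (hB : ∀ γ ∈ Set.Ioo (0 : ℝ) 1, ∀ n : ℕ, 1 ≤ n → IsGreatest
      {x : ℝ | ∃ k : ℕ, (1 - γ) * (n : ℝ) ≤ (k : ℝ) ∧ k ≤ n ∧
        x = ‖a k‖ ^ ((k : ℝ)⁻¹)} (B γ n))
    (hL : ∀ γ ∈ Set.Ioo (0 : ℝ) 1,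
      ((L γ : ℝ) : EReal) = Filter.liminf (fun n : ℕ => ((B γ n / A n : ℝ) : EReal))
        Filter.atTop)
    (hG : Filter.Tendsto L (nhdsWithin 0 (Set.Ioi (0 : ℝ))) (nhds G))
    (hP : ∀ n : ℕ, P n = ∑ k ∈ Finset.range (n + 1),
      Polynomial.C (a k * ((A n : ℂ))⁻¹ ^ k) * Polynomial.X ^ k) :
    (∀ δ : ℝ, 0 < δ → ∀ γ ∈ Set.Ioo (0 : ℝ) 1,
      (((1 + δ) ^ (-γ) * L γ : ℝ) : EReal) ≤
        Filter.liminf (fun n : ℕ =>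
          ((sSup ((fun z : ℂ =>
              ‖(P n).eval z‖ ^ ((n : ℝ)⁻¹) / ‖z‖) ''
            Metric.sphere (0 : ℂ) (1 + δ)) : ℝ) : EReal)) Filter.atTop) ∧
    (∀ δ : ℝ, 0 < δ →
      ((G : ℝ) : EReal) ≤
        Filter.liminf (fun n : ℕ =>
          ((sSup ((fun z : ℂ =>
              ‖(P n).eval z‖ ^ ((n : ℝ)⁻¹) / ‖z‖) ''
            Metric.sphere (0 : ℂ) (1 + δ)) : ℝ) : EReal)) Filter.atTop) :=
  stmt_15_general a A B L G P hA hB hL hG hP
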